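/- Fix a prime p. The number of elements α ∈ ℤ[1/p] with absolute Weil height H(α) ≤ 𝓗 equals (2/log p)(1 − 1/p) 𝓗 log 𝓗 + O_p(𝓗) as 𝓗 → ∞. -/

import Mathlib

/-!
An element of `ℤ[1/p]` of height at most `H` is a reduced fraction `a / p ^ j` with
`|a| ≤ n := ⌊H⌋` and `p ^ j ≤ n`, i.e. `j ≤ J := log_p n`. For `j = 0` every `a ∈ [-n, n]` occurs;
for `j ≥ 1` exactly those prime to `p`, of which there are `2 (n - ⌊n / p⌋) = 2 (1 - 1/p) H + O(1)`.
So the count is `2n + 1 + 2 J ((1 - 1/p) H + O(1))`, and `J = log H / log p + O(1)` with `J ≤ H`.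
-/

open Finset

lemma Int.card_Icc_filter_eq_two_mul_card_Ioc_filter (n : ℕ) (P : ℤ → Prop) [DecidablePred P]
    (hP0 : ¬ P 0) (hPneg : ∀ a, P (-a) ↔ P a) :
    #{a ∈ Icc (-(n : ℤ)) n | P a} = 2 * #((Ioc 0 n).filter fun x : ℕ ↦ P x) := by
  set S := (Ioc 0 n).filter fun x : ℕ ↦ P x
  have hsplit : {a ∈ Icc (-(n : ℤ)) n | P a} =
      (S.map Nat.castEmbedding).disjUnion
        (S.map (Nat.castEmbedding.trans (Equiv.neg ℤ).toEmbedding)) (by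
          simp only [disjoint_left, mem_map, mem_filter, mem_Ioc, S]
          rintro _ ⟨x, ⟨⟨hx, -⟩, -⟩, rfl⟩ ⟨y, ⟨⟨hy, -⟩, -⟩, hxy⟩
          simp only [Function.Embedding.trans_apply, Nat.castEmbedding_apply,
            Function.Embedding.coeFn_mk, Equiv.neg_apply, Nat.neg_cast_eq_cast] at hxy
          omega) := by
    ext a
    obtain ⟨x, rfl | rfl⟩ := Int.eq_nat_or_neg a <;>
      rcases x.eq_zero_or_pos with rfl | hx <;>
      simp [S, hP0, hPneg] <;> omega
  rw [hsplit, card_disjUnion, card_map, card_map, two_mul]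

lemma Int.card_Icc_filter_not_dvd (p n : ℕ) :
    #{a ∈ Icc (-(n : ℤ)) n | ¬ (p : ℤ) ∣ a} = 2 * (n - n / p) := by
  rw [Int.card_Icc_filter_eq_two_mul_card_Ioc_filter n _ (by simp) (fun a ↦ by simp)]
  simp only [Int.natCast_dvd_natCast]
  rw [filter_not, card_sdiff_of_subset (filter_subset _ _), Nat.card_Ioc, Nat.sub_zero,
    Nat.Ioc_filter_dvd_card_eq_div]

lemma Rat.card_den_mem_abs_num_le (D : Finset ℕ) (hD : 0 ∉ D) (n : ℕ) :
    Nat.card {α : ℚ | α.den ∈ D ∧ |α.num| ≤ n} =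
      ∑ d ∈ D, #{a ∈ Icc (-(n : ℤ)) n | a.natAbs.Coprime d} := by
  have hinj : Function.Injective fun α : ℚ ↦ (α.den, α.num) := fun α β h ↦
    Rat.ext (Prod.ext_iff.1 h).2 (Prod.ext_iff.1 h).1
  have himage : (fun α : ℚ ↦ (α.den, α.num)) '' {α : ℚ | α.den ∈ D ∧ |α.num| ≤ n} =
      ↑{x ∈ D ×ˢ Icc (-(n : ℤ)) n | x.2.natAbs.Coprime x.1} := by
    ext ⟨d, a⟩
    simp only [Set.mem_image, Set.mem_ofPred_eq, Prod.mk.injEq, coe_filter, mem_product, mem_Icc,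
      ← abs_le]
    constructor
    · rintro ⟨α, ⟨hd, ha⟩, rfl, rfl⟩
      exact ⟨⟨hd, ha⟩, α.reduced⟩
    · rintro ⟨⟨hd, ha⟩, hcop⟩
      exact ⟨⟨a, d, ne_of_mem_of_not_mem hd hD, hcop⟩, ⟨hd, ha⟩, rfl, rfl⟩
  rw [← Nat.card_image_of_injective hinj, himage, Nat.card_coe_set_eq, Set.ncard_coe_finset]
  simp only [card_filter, sum_product]

lemma Int.natAbs_coprime_prime_pow_iff {p : ℕ} (hp : p.Prime) {j : ℕ} (hj : j ≠ 0) (a : ℤ) :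
    a.natAbs.Coprime (p ^ j) ↔ ¬ (p : ℤ) ∣ a := by
  rw [Nat.coprime_pow_right_iff (Nat.pos_of_ne_zero hj), Nat.coprime_comm,
    hp.coprime_iff_not_dvd, Int.natCast_dvd]

lemma Rat.card_den_eq_pow_abs_num_le {p : ℕ} (hp : p.Prime) {n : ℕ} (hn : n ≠ 0) :
    Nat.card {α : ℚ | (∃ j : ℕ, α.den = p ^ j) ∧ |α.num| ≤ n ∧ α.den ≤ n} =
      2 * n + 1 + Nat.log p n * (2 * (n - n / p)) := by
  have hset : {α : ℚ | (∃ j : ℕ, α.den = p ^ j) ∧ |α.num| ≤ n ∧ α.den ≤ n} =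
      {α : ℚ | α.den ∈ (range (Nat.log p n + 1)).image (p ^ ·) ∧ |α.num| ≤ n} := by
    ext α
    simp only [Set.mem_ofPred_eq, mem_image, mem_range, Nat.lt_succ_iff,
      Nat.le_log_iff_pow_le hp.one_lt hn]
    constructor
    · rintro ⟨⟨j, hj⟩, hnum, hden⟩
      exact ⟨⟨j, hj ▸ hden, hj.symm⟩, hnum⟩
    · rintro ⟨⟨j, hj, hden⟩, hnum⟩
      exact ⟨⟨j, hden.symm⟩, hnum, hden ▸ hj⟩
  rw [hset, card_den_mem_abs_num_le _ (by simp [hp.ne_zero]),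
    sum_image fun i _ j _ h ↦ Nat.pow_right_injective hp.two_le h, sum_range_succ']
  simp_rw [Int.natAbs_coprime_prime_pow_iff hp (Nat.succ_ne_zero _), Int.card_Icc_filter_not_dvd]
  simp only [sum_const, card_range, smul_eq_mul, pow_zero, Nat.coprime_one_right_eq_true,
    filter_true, Int.card_Icc, sub_neg_eq_add]
  omega

lemma Rat.card_den_eq_pow_height_le {p : ℕ} (hp : p.Prime) {H : ℝ} (hH : 1 ≤ H) :
    Nat.card {α : ℚ | (∃ j : ℕ, α.den = p ^ j) ∧ max |(α.num : ℝ)| (α.den : ℝ) ≤ H} =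
      2 * ⌊H⌋₊ + 1 + Nat.log p ⌊H⌋₊ * (2 * (⌊H⌋₊ - ⌊H⌋₊ / p)) := by
  have hH0 : 0 ≤ H := zero_le_one.trans hH
  rw [← card_den_eq_pow_abs_num_le hp (Nat.floor_pos.2 hH).ne']
  congr! 4 with α
  rw [max_le_iff, ← Int.cast_abs, ← Int.le_floor, ← Int.natCast_floor_eq_floor hH0,
    Nat.le_floor_iff hH0]

lemma Real.natLog_floor_eq_floor_logb (b : ℕ) {H : ℝ} (hH : 1 ≤ H) :
    (Nat.log b ⌊H⌋₊ : ℤ) = ⌊Real.logb b H⌋ := by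
  rw [floor_logb_natCast (zero_le_one.trans hH), Int.log_of_one_le_right _ hH]

lemma abs_natLog_floor_sub_logb_le (b : ℕ) {H : ℝ} (hH : 1 ≤ H) :
    |(Nat.log b ⌊H⌋₊ : ℝ) - Real.logb b H| ≤ 1 := by
  have h : ((Nat.log b ⌊H⌋₊ : ℤ) : ℝ) = (Nat.log b ⌊H⌋₊ : ℝ) := Int.cast_natCast _
  rw [Real.natLog_floor_eq_floor_logb b hH] at h
  rw [← h, abs_sub_comm, Int.self_sub_floor, abs_of_nonneg (Int.fract_nonneg _)]
  exact (Int.fract_lt_one _).le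

lemma abs_floor_sub_floor_div_sub_le {p : ℕ} (hp : 0 < p) {H : ℝ} (hH : 0 ≤ H) :
    |((⌊H⌋₊ - ⌊H⌋₊ / p : ℕ) : ℝ) - (1 - 1 / p) * H| ≤ 1 := by
  rw [← Nat.floor_div_natCast, Nat.cast_sub (Nat.floor_le_floor (div_le_self hH
    (by exact_mod_cast hp)))]
  have := Nat.floor_le hH
  have := Nat.lt_floor_add_one H
  have := Nat.floor_le (div_nonneg hH (Nat.cast_nonneg p))
  have := Nat.lt_floor_add_one (H / p)
  rw [abs_le]
  constructor <;> linarith [show (1 - 1 / (p : ℝ)) * H = H - H / p by ring]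

/-- for a fixed prime `p`, the number of elements `α ∈ ℤ[1/p]`
(rationals whose denominator is a power of `p`) of absolute Weil height
`H(α) = max{|num α|, den α} ≤ 𝓗` equals
`(2/log p)(1 − 1/p) 𝓗 log 𝓗 + O_p(𝓗)` as `𝓗 → ∞`. -/
theorem count_Z_inv_p_of_bounded_height (p : ℕ) (hp : p.Prime) :
    ∃ C : ℝ, 0 < C ∧ ∃ H₀ : ℝ, ∀ H : ℝ, H₀ ≤ H →
      |(Nat.card {α : ℚ | (∃ j : ℕ, α.den = p ^ j) ∧
          max |(α.num : ℝ)| (α.den : ℝ) ≤ H} : ℝ) -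
        (2 / Real.log p) * (1 - 1 / (p : ℝ)) * H * Real.log H| ≤ C * H := by
  refine ⟨7, by norm_num, 1, fun H hH ↦ ?_⟩
  have hlog : (2 / Real.log p) * (1 - 1 / (p : ℝ)) * H * Real.log H =
      2 * (1 - 1 / (p : ℝ)) * H * Real.logb p H := by
    rw [Real.logb]; ring
  have hJ := abs_natLog_floor_sub_logb_le p hH
  have hm := abs_floor_sub_floor_div_sub_le hp.pos (zero_le_one.trans hH)
  rw [Rat.card_den_eq_pow_height_le hp hH, hlog]
  set n := ⌊H⌋₊
  set J := Nat.log p n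
  set c : ℝ := 1 - 1 / (p : ℝ)
  have hn : (n : ℝ) ≤ H := Nat.floor_le (zero_le_one.trans hH)
  have hJn : (J : ℝ) ≤ n := by exact_mod_cast Nat.log_le_self p n
  have hc0 : 0 ≤ c := sub_nonneg.2 (div_le_one_of_le₀ (by exact_mod_cast hp.one_le) (by positivity))
  have hc1 : c ≤ 1 := sub_le_self _ (by positivity)
  push_cast
  calc _ = |(2 * n + 1) + 2 * J * (((n - n / p : ℕ) : ℝ) - c * H) +
        2 * c * H * (J - Real.logb p H)| := by congr 1; ring
    _ ≤ (2 * n + 1) + 2 * J * |((n - n / p : ℕ) : ℝ) - c * H| +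
        2 * c * H * |(J : ℝ) - Real.logb p H| := by
      refine (abs_add_le _ _).trans (add_le_add ((abs_add_le _ _).trans (add_le_add ?_ ?_)) ?_)
      · exact (abs_of_nonneg (by positivity)).le
      · rw [abs_mul, abs_of_nonneg (by positivity : (0 : ℝ) ≤ 2 * J)]
      · rw [abs_mul, abs_of_nonneg (by positivity : 0 ≤ 2 * c * H)]
    _ ≤ (2 * n + 1) + 2 * J * 1 + 2 * 1 * H * 1 := by gcongr
    _ ≤ 7 * H := by linarith
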